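/- Let κ ≥ 0 and p, w ∈ ℝ⁴ with ⟨p,p⟩ = 0, ⟨p,w⟩ = 0 and ⟨w,w⟩ = −κ². On the open set Ω' = {e ∈ ℝ⁴ : ⟨e,e⟩ < 0 and ⟨e,p⟩ ≠ 0} define u₀(e) := exp( −i·(κ·√(−⟨e,e⟩) + ⟨e,w⟩)/⟨e,p⟩ ). Then for all e ∈ Ω': (i) D_e u₀(e) = 0 (homogeneity of degree 0 in e); (ii) √(−⟨e,e⟩) · D_p u₀(e) = i·κ · u₀(e); and (iii) √(−⟨e,e⟩) · ⟨e,p⟩ · □u₀(e) = i·κ · u₀(e), where □ := ∂²/∂(e⁰)² − ∂²/∂(e¹)² − ∂²/∂(e²)² − ∂²/∂(e³)². (The equations of motion (e∂_e)φ^{κ(0)} = 0, √(−e²)(∂_x∂_e)φ^{κ(0)} = −κφ^{κ(0)} and √(−e²)(e∂_x)□_e φ^{κ(0)} = −κφ^{κ(0)} of Proposition 2.2, expressed at the level of the standard intertwiner u^{κ(0)} including the Köhler factor.) -/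

import Mathlib

noncomputable section

/-- Minkowski bilinear form on ℝ⁴. -/
def mink (a b : Fin 4 → ℝ) : ℝ := a 0 * b 0 - a 1 * b 1 - a 2 * b 2 - a 3 * b 3

/-- Directional derivative `D_v f(e) = (d/dt) f(e+tv)|_{t=0}`. -/
def Dv (v : Fin 4 → ℝ) (f : (Fin 4 → ℝ) → ℂ) (e : Fin 4 → ℝ) : ℂ :=
  deriv (fun t : ℝ => f (e + t • v)) 0

/-- Standard basis vector of ℝ⁴. -/
def bvec (μ : Fin 4) : Fin 4 → ℝ := fun i => if i = μ then 1 else 0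

/-- The wave operator `□ = ∂²₀ − ∂²₁ − ∂²₂ − ∂²₃` in the variable `e`. -/
def box (f : (Fin 4 → ℝ) → ℂ) (e : Fin 4 → ℝ) : ℂ :=
  Dv (bvec 0) (Dv (bvec 0) f) e - Dv (bvec 1) (Dv (bvec 1) f) e -
    Dv (bvec 2) (Dv (bvec 2) f) e - Dv (bvec 3) (Dv (bvec 3) f) e

/-- The standard intertwiner `u^{κ(0)}` including the Köhler factor. -/
def u0 (κ : ℝ) (p w : Fin 4 → ℝ) (e : Fin 4 → ℝ) : ℂ :=
  Complex.exp (-Complex.I * ((κ * Real.sqrt (-mink e e) + mink e w : ℝ) : ℂ) /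
    ((mink e p : ℝ) : ℂ))

/-!
Write `u₀ = exp (-i φ)` with the real phase `φ(e) = (κ √(-⟨e,e⟩) + ⟨e,w⟩) / ⟨e,p⟩`, which is
homogeneous of degree `0`. Along any direction `v`, `D_v u₀ = -i ⟨v, ∇φ⟩ u₀` and
`D_v D_v u₀ = (-(D_v φ)² - i D_v² φ) u₀`, so `□u₀ = (-⟨∇φ,∇φ⟩ - i □φ) u₀`. The conditions
`⟨p,p⟩ = ⟨p,w⟩ = 0`, `⟨w,w⟩ = -κ²` make `∇φ` a null vector with `⟨∇φ, p⟩ = -κ / √(-⟨e,e⟩)`,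
and then `□φ = -κ / (√(-⟨e,e⟩) ⟨e,p⟩)`.
-/

open Topology Complex

section Minkowski

lemma mink_comm (a b : Fin 4 → ℝ) : mink a b = mink b a := by
  unfold mink; ring

@[simp] lemma mink_add_right (a b c : Fin 4 → ℝ) : mink a (b + c) = mink a b + mink a c := by
  simp only [mink, Pi.add_apply]; ring

@[simp] lemma mink_sub_right (a b c : Fin 4 → ℝ) : mink a (b - c) = mink a b - mink a c := by
  simp only [mink, Pi.sub_apply]; ring

@[simp] lemma mink_smul_right (a b : Fin 4 → ℝ) (r : ℝ) : mink a (r • b) = r * mink a b := by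
  simp only [mink, Pi.smul_apply, smul_eq_mul]; ring

@[simp] lemma mink_add_left (a b c : Fin 4 → ℝ) : mink (a + b) c = mink a c + mink b c := by
  simp only [mink, Pi.add_apply]; ring

@[simp] lemma mink_sub_left (a b c : Fin 4 → ℝ) : mink (a - b) c = mink a c - mink b c := by
  simp only [mink, Pi.sub_apply]; ring

@[simp] lemma mink_smul_left (a b : Fin 4 → ℝ) (r : ℝ) : mink (r • a) b = r * mink a b := by
  simp only [mink, Pi.smul_apply, smul_eq_mul]; ring

lemma mink_add_smul_left (x v a : Fin 4 → ℝ) (t : ℝ) :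
    mink (x + t • v) a = mink x a + t * mink v a := by
  simp only [mink, Pi.add_apply, Pi.smul_apply, smul_eq_mul]; ring

lemma mink_add_smul_self (x v : Fin 4 → ℝ) (t : ℝ) :
    mink (x + t • v) (x + t • v) = mink x x + 2 * t * mink x v + t ^ 2 * mink v v := by
  simp only [mink, Pi.add_apply, Pi.smul_apply, smul_eq_mul]; ring

lemma continuous_mink_left (a : Fin 4 → ℝ) : Continuous fun x => mink x a := by
  unfold mink; fun_prop

lemma continuous_mink_self : Continuous fun x : Fin 4 → ℝ => mink x x := by
  unfold mink; fun_prop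

/-- `box f e = minkTrace fun v => Dv v (Dv v f) e`. -/
def minkTrace {M : Type*} [AddCommGroup M] (φ : (Fin 4 → ℝ) → M) : M :=
  φ (bvec 0) - φ (bvec 1) - φ (bvec 2) - φ (bvec 3)

lemma minkTrace_mink_mul_mink (a b : Fin 4 → ℝ) :
    minkTrace (fun v => mink v a * mink v b) = mink a b := by
  simp [minkTrace, mink, bvec]

lemma minkTrace_mink_self : minkTrace (fun v : Fin 4 → ℝ => mink v v) = 4 := by
  simp [minkTrace, mink, bvec]; norm_num

end Minkowski

section LineDeriv

variable {E F : Type*} [NormedAddCommGroup E] [NormedSpace ℝ E]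
  [NormedAddCommGroup F] [NormedSpace ℝ F]

lemma lineDeriv_lineDeriv_eq {f f' : E → F} {f'' : F} {x v : E}
    (hf : ∀ᶠ y in 𝓝 x, HasLineDerivAt ℝ f (f' y) y v) (hf' : HasLineDerivAt ℝ f' f'' x v) :
    lineDeriv ℝ (fun y => lineDeriv ℝ f y v) x v = f'' :=
  (hf'.congr_of_eventuallyEq (hf.mono fun _ hy => hy.lineDeriv)).lineDeriv

lemma HasLineDerivAt.cexp_neg_I_mul {φ : E → ℝ} {φ' : ℝ} {x v : E}
    (h : HasLineDerivAt ℝ φ φ' x v) :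
    HasLineDerivAt ℝ (fun y => cexp (-I * φ y)) (cexp (-I * φ x) * (-I * φ')) x v := by
  have h' := ((HasDerivAt.ofReal_comp h).const_mul (-I)).cexp
  simp only [zero_smul, add_zero] at h'
  exact h'

lemma lineDeriv_lineDeriv_cexp_neg_I_mul {φ φ' : E → ℝ} {φ'' : ℝ} {x v : E}
    (hφ : ∀ᶠ y in 𝓝 x, HasLineDerivAt ℝ φ (φ' y) y v) (hφ' : HasLineDerivAt ℝ φ' φ'' x v) :
    lineDeriv ℝ (fun y => lineDeriv ℝ (fun z => cexp (-I * φ z)) y v) x v =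
      cexp (-I * φ x) * (-(φ' x : ℂ) ^ 2 - I * φ'') := by
  refine lineDeriv_lineDeriv_eq (hφ.mono fun y hy => hy.cexp_neg_I_mul) ?_
  have hprod := HasDerivAt.mul hφ.self_of_nhds.cexp_neg_I_mul
    ((HasDerivAt.ofReal_comp hφ').const_mul (-I))
  simp only [zero_smul, add_zero] at hprod
  refine hprod.congr_deriv ?_
  linear_combination (cexp (-I * φ x) * (φ' x : ℂ) ^ 2) * I_sq

end LineDeriv

section Phase

def minkNorm (x : Fin 4 → ℝ) : ℝ := Real.sqrt (-mink x x)

def phase (κ : ℝ) (p w x : Fin 4 → ℝ) : ℝ := (κ * minkNorm x + mink x w) / mink x p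

def phaseDeriv (κ : ℝ) (p w v x : Fin 4 → ℝ) : ℝ :=
  (κ * (-mink x v / minkNorm x) + mink v w - phase κ p w x * mink v p) / mink x p

/-- Differentiate `phase * ⟨x,p⟩ = κ * minkNorm + ⟨x,w⟩` twice along `v`; the first summand
contains the second derivative of `minkNorm`. -/
def phaseDeriv2 (κ : ℝ) (p w v x : Fin 4 → ℝ) : ℝ :=
  (κ * (-(mink v v + (mink x v / minkNorm x) ^ 2) / minkNorm x) -
    2 * phaseDeriv κ p w v x * mink v p) / mink x p

def phaseGrad (κ : ℝ) (p w x : Fin 4 → ℝ) : Fin 4 → ℝ :=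
  (mink x p)⁻¹ • ((-κ / minkNorm x) • x + w - phase κ p w x • p)

lemma u0_eq_cexp_phase (κ : ℝ) (p w : Fin 4 → ℝ) :
    u0 κ p w = fun x => cexp (-I * phase κ p w x) := by
  funext x
  rw [u0, phase, minkNorm]
  push_cast
  rw [mul_div_assoc]

lemma minkNorm_sq {x : Fin 4 → ℝ} (hx : mink x x < 0) : minkNorm x ^ 2 = -mink x x :=
  Real.sq_sqrt (by linarith)

lemma minkNorm_pos {x : Fin 4 → ℝ} (hx : mink x x < 0) : 0 < minkNorm x :=
  Real.sqrt_pos.mpr (by linarith)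

lemma hasLineDerivAt_mink_left (a x v : Fin 4 → ℝ) :
    HasLineDerivAt ℝ (fun y => mink y a) (mink v a) x v := by
  have h := ((hasDerivAt_id (0 : ℝ)).mul_const (mink v a)).const_add (mink x a)
  simp only [id, one_mul, ← mink_add_smul_left] at h
  exact h

lemma hasLineDerivAt_mink_self (x v : Fin 4 → ℝ) :
    HasLineDerivAt ℝ (fun y => mink y y) (2 * mink x v) x v := by
  have h := (((hasDerivAt_id (0 : ℝ)).const_mul (2 * mink x v)).add
    ((hasDerivAt_pow 2 (0 : ℝ)).mul_const (mink v v))).const_add (mink x x)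
  unfold HasLineDerivAt
  simp only [mink_add_smul_self]
  convert h using 1
  · funext t; simp only [Pi.add_apply, id]; ring
  · simp

lemma hasLineDerivAt_minkNorm {x : Fin 4 → ℝ} (v : Fin 4 → ℝ) (hx : mink x x < 0) :
    HasLineDerivAt ℝ minkNorm (-mink x v / minkNorm x) x v := by
  have h := HasDerivAt.sqrt (hasLineDerivAt_mink_self x v).neg (by simp; linarith)
  simp only [Pi.neg_apply, zero_smul, add_zero] at h
  refine h.congr_deriv ?_
  rw [minkNorm]
  field_simp

lemma hasLineDerivAt_minkNorm_deriv {x : Fin 4 → ℝ} (v : Fin 4 → ℝ) (hx : mink x x < 0) :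
    HasLineDerivAt ℝ (fun y => -mink y v / minkNorm y)
      (-(mink v v + (mink x v / minkNorm x) ^ 2) / minkNorm x) x v := by
  have hN := (minkNorm_pos hx).ne'
  have h := HasDerivAt.div (hasLineDerivAt_mink_left v x v).neg (hasLineDerivAt_minkNorm v hx)
    (by simpa using hN)
  simp only [Pi.neg_apply, zero_smul, add_zero] at h
  refine h.congr_deriv ?_
  field_simp
  ring

variable {κ : ℝ} {p w x : Fin 4 → ℝ}

lemma hasLineDerivAt_phase (v : Fin 4 → ℝ) (hx : mink x x < 0) (hp : mink x p ≠ 0) :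
    HasLineDerivAt ℝ (phase κ p w) (phaseDeriv κ p w v x) x v := by
  have h := HasDerivAt.div (((hasLineDerivAt_minkNorm v hx).const_mul κ).add
    (hasLineDerivAt_mink_left w x v)) (hasLineDerivAt_mink_left p x v) (by simpa using hp)
  simp only [Pi.add_apply, zero_smul, add_zero] at h
  refine h.congr_deriv ?_
  rw [phaseDeriv, phase]
  field_simp

lemma hasLineDerivAt_phaseDeriv (v : Fin 4 → ℝ) (hx : mink x x < 0) (hp : mink x p ≠ 0) :
    HasLineDerivAt ℝ (phaseDeriv κ p w v) (phaseDeriv2 κ p w v x) x v := by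
  have h := HasDerivAt.div ((((hasLineDerivAt_minkNorm_deriv v hx).const_mul κ).add_const
    (mink v w)).sub ((hasLineDerivAt_phase (κ := κ) (w := w) v hx hp).mul_const (mink v p)))
    (hasLineDerivAt_mink_left p x v) (by simpa using hp)
  simp only [Pi.sub_apply, zero_smul, add_zero] at h
  refine h.congr_deriv ?_
  rw [phaseDeriv2, phaseDeriv]
  field_simp
  ring

lemma eventually_hasLineDerivAt_phase (v : Fin 4 → ℝ) (hx : mink x x < 0) (hp : mink x p ≠ 0) :
    ∀ᶠ y in 𝓝 x, HasLineDerivAt ℝ (phase κ p w) (phaseDeriv κ p w v y) y v := by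
  filter_upwards [continuous_mink_self.continuousAt.eventually_lt continuousAt_const hx,
    (continuous_mink_left p).continuousAt.eventually_ne hp] with y hy hyp
  exact hasLineDerivAt_phase v hy hyp

lemma Dv_u0 (v : Fin 4 → ℝ) (hx : mink x x < 0) (hp : mink x p ≠ 0) :
    Dv v (u0 κ p w) x = u0 κ p w x * (-I * phaseDeriv κ p w v x) := by
  rw [u0_eq_cexp_phase]
  exact (hasLineDerivAt_phase v hx hp).cexp_neg_I_mul.lineDeriv

lemma Dv_Dv_u0 (v : Fin 4 → ℝ) (hx : mink x x < 0) (hp : mink x p ≠ 0) :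
    Dv v (Dv v (u0 κ p w)) x =
      u0 κ p w x * (-(phaseDeriv κ p w v x : ℂ) ^ 2 - I * phaseDeriv2 κ p w v x) := by
  rw [u0_eq_cexp_phase]
  exact lineDeriv_lineDeriv_cexp_neg_I_mul (eventually_hasLineDerivAt_phase v hx hp)
    (hasLineDerivAt_phaseDeriv v hx hp)

lemma box_u0 (hx : mink x x < 0) (hp : mink x p ≠ 0) :
    box (u0 κ p w) x = -u0 κ p w x * (((minkTrace fun v => phaseDeriv κ p w v x ^ 2 : ℝ) : ℂ) +
      I * ((minkTrace fun v => phaseDeriv2 κ p w v x : ℝ) : ℂ)) := by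
  simp only [box, Dv_Dv_u0 _ hx hp, minkTrace]
  push_cast
  ring

lemma phaseDeriv_eq_mink_phaseGrad (v : Fin 4 → ℝ) :
    phaseDeriv κ p w v x = mink v (phaseGrad κ p w x) := by
  rw [phaseDeriv, phaseGrad, mink_smul_right, mink_sub_right, mink_add_right, mink_smul_right,
    mink_smul_right, mink_comm v x]
  ring

lemma phaseDeriv_self (hx : mink x x < 0) (hp : mink x p ≠ 0) : phaseDeriv κ p w x x = 0 := by
  rw [phaseDeriv, div_eq_zero_iff, phase, div_mul_cancel₀ _ hp, ← neg_neg (mink x x),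
    ← minkNorm_sq hx]
  left
  field_simp
  ring

section NullData

variable (hpp : mink p p = 0) (hpw : mink p w = 0)
include hpp hpw

lemma phaseDeriv_p (hp : mink x p ≠ 0) : phaseDeriv κ p w p x = -κ / minkNorm x := by
  rw [phaseDeriv, hpw, hpp]
  field_simp
  ring

lemma mink_phaseGrad_self (hww : mink w w = -κ ^ 2) (hx : mink x x < 0) (hp : mink x p ≠ 0) :
    mink (phaseGrad κ p w x) (phaseGrad κ p w x) = 0 := by
  have hN := (minkNorm_pos hx).ne'
  simp only [phaseGrad, phase, mink_smul_left, mink_smul_right, mink_add_left, mink_add_right,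
    mink_sub_left, mink_sub_right]
  rw [mink_comm w x, mink_comm p x, mink_comm w p, hpp, hpw, hww,
    ← neg_neg (mink x x), ← minkNorm_sq hx]
  field_simp
  ring

lemma minkTrace_phaseDeriv_sq (hww : mink w w = -κ ^ 2) (hx : mink x x < 0)
    (hp : mink x p ≠ 0) : minkTrace (fun v => phaseDeriv κ p w v x ^ 2) = 0 := by
  simp only [phaseDeriv_eq_mink_phaseGrad, sq]
  rw [minkTrace_mink_mul_mink, mink_phaseGrad_self hpp hpw hww hx hp]

lemma minkNorm_mul_mink_mul_minkTrace_phaseDeriv2 (hx : mink x x < 0) (hp : mink x p ≠ 0) :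
    minkNorm x * mink x p * minkTrace (fun v => phaseDeriv2 κ p w v x) = -κ := by
  have hN := (minkNorm_pos hx).ne'
  have hsplit : minkTrace (fun v => phaseDeriv2 κ p w v x) =
      (κ * (-(minkTrace (fun v => mink v v) +
          minkTrace (fun v => mink v x * mink v x) / minkNorm x ^ 2) / minkNorm x) -
        2 * minkTrace (fun v => mink v (phaseGrad κ p w x) * mink v p)) / mink x p := by
    simp only [minkTrace, phaseDeriv2, phaseDeriv_eq_mink_phaseGrad, mink_comm x (bvec _)]
    ring
  rw [hsplit, minkTrace_mink_self, minkTrace_mink_mul_mink, minkTrace_mink_mul_mink,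
    mink_comm (phaseGrad κ p w x) p, ← phaseDeriv_eq_mink_phaseGrad, phaseDeriv_p hpp hpw hp,
    ← neg_neg (mink x x), ← minkNorm_sq hx]
  field_simp
  ring

end NullData

end Phase

theorem standard_intertwiner_eoms_general (κ : ℝ) (p w : Fin 4 → ℝ)
    (hpp : mink p p = 0) (hpw : mink p w = 0) (hww : mink w w = -κ ^ 2) :
    ∀ e : Fin 4 → ℝ, mink e e < 0 → mink e p ≠ 0 →
      Dv e (u0 κ p w) e = 0 ∧
      (Real.sqrt (-mink e e) : ℂ) * Dv p (u0 κ p w) e = Complex.I * (κ : ℂ) * u0 κ p w e ∧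
      (Real.sqrt (-mink e e) : ℂ) * ((mink e p : ℝ) : ℂ) * box (u0 κ p w) e =
        Complex.I * (κ : ℂ) * u0 κ p w e := by
  intro e he hp
  have hN : (minkNorm e : ℂ) ≠ 0 := ofReal_ne_zero.mpr (minkNorm_pos he).ne'
  refine ⟨?_, ?_, ?_⟩
  · rw [Dv_u0 e he hp, phaseDeriv_self he hp]
    simp
  · show (minkNorm e : ℂ) * _ = _
    rw [Dv_u0 p he hp, phaseDeriv_p hpp hpw hp]
    push_cast
    field_simp
  · show (minkNorm e : ℂ) * _ * _ = _
    have hbox := congrArg ((↑) : ℝ → ℂ)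
      (minkNorm_mul_mink_mul_minkTrace_phaseDeriv2 (κ := κ) (w := w) hpp hpw he hp)
    rw [box_u0 he hp, minkTrace_phaseDeriv_sq hpp hpw hww he hp]
    push_cast at hbox ⊢
    linear_combination (-I * u0 κ p w e) * hbox

/-- The equations of motion of Proposition 2.2 at the level of the standard intertwiner:
homogeneity `(e∂_e)u₀ = 0`, `√(−e²)·D_p u₀ = iκ·u₀` and `√(−e²)·(e,p)·□u₀ = iκ·u₀`. -/
theorem standard_intertwiner_eoms (κ : ℝ) (hκ : 0 ≤ κ) (p w : Fin 4 → ℝ)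
    (hpp : mink p p = 0) (hpw : mink p w = 0) (hww : mink w w = -κ ^ 2) :
    ∀ e : Fin 4 → ℝ, mink e e < 0 → mink e p ≠ 0 →
      Dv e (u0 κ p w) e = 0 ∧
      (Real.sqrt (-mink e e) : ℂ) * Dv p (u0 κ p w) e = Complex.I * (κ : ℂ) * u0 κ p w e ∧
      (Real.sqrt (-mink e e) : ℂ) * ((mink e p : ℝ) : ℂ) * box (u0 κ p w) e =
        Complex.I * (κ : ℂ) * u0 κ p w e :=
  standard_intertwiner_eoms_general κ p w hpp hpw hww
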